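/- arXiv:1810.04390 — 3 statements merged into one kernel-verified Lean document; each statement's English description precedes it below -/
import Mathlib

section
/- Let S ∈ ℝ^{m×m} be symmetric negative semidefinite and nonzero, and let P ∈ ℝ^{m×m} be symmetric positive definite, with P = AᵀA for invertible A. Then max { β ≥ 0 : βS + P is positive semidefinite } = -1/λ₁, where λ₁ < 0 is the smallest eigenvalue of A^{-T} S A^{-1}. -/
/-!
With `M = A⁻ᵀ S A⁻¹` we have `β • S + P = Aᵀ (β • M + 1) A`, and congruence by an invertible
matrix preserves positive semidefiniteness, so `β • S + P ⪰ 0` iff `1 + β λ ≥ 0` for every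
eigenvalue `λ` of `M`. These eigenvalues are `≤ 0` (as `-M ⪰ 0`) and not all zero (as `S ≠ 0`),
so the binding constraint is the one at `λ₁ < 0`, giving `β ≤ -1/λ₁`.
-/

open Matrix
open scoped ComplexOrder MatrixOrder

namespace Matrix.IsHermitian

variable {n 𝕜 : Type*} [Fintype n] [DecidableEq n] [RCLike 𝕜] {A : Matrix n n 𝕜}

lemma posSemidef_smul_add_smul_one_iff (hA : A.IsHermitian) (β c : ℝ) :
    (β • A + c • (1 : Matrix n n 𝕜)).PosSemidef ↔ ∀ i, 0 ≤ β * hA.eigenvalues i + c := by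
  have hcfc : β • A + c • (1 : Matrix n n 𝕜) = cfc (fun x : ℝ ↦ β * x + c) A := by
    rw [cfc_add .., cfc_const_mul .., cfc_id' .., cfc_const .., Algebra.algebraMap_eq_smul_one]
  rw [← nonneg_iff_posSemidef, hcfc, cfc_nonneg_iff (fun x : ℝ ↦ β * x + c) A,
    hA.spectrum_real_eq_range_eigenvalues, Set.forall_mem_range]

end Matrix.IsHermitian

lemma isGreatest_setOf_forall_mul_add_one_nonneg {ι : Type*} [Finite ι] {l : ι → ℝ}
    (h : ⨅ i, l i < 0) :
    IsGreatest {β : ℝ | 0 ≤ β ∧ ∀ i, 0 ≤ β * l i + 1} (-1 / ⨅ i, l i) := by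
  have : Nonempty ι := by -- a real `⨅` over an empty type is `0`
    by_contra! hι
    simp [Real.iInf_of_isEmpty] at h
  obtain ⟨i₀, hi₀⟩ := exists_eq_ciInf_of_finite (f := l)
  have hle : ∀ i, ⨅ i, l i ≤ l i := ciInf_le (Set.finite_range l).bddBelow
  set l₁ := ⨅ i, l i
  have hβ₁ : 0 ≤ -1 / l₁ := div_nonneg_of_nonpos (by norm_num) h.le
  refine ⟨⟨hβ₁, fun i ↦ ?_⟩, fun β ⟨_, hβ⟩ ↦ ?_⟩
  · calc 0 = -1 / l₁ * l₁ + 1 := by rw [div_mul_cancel₀ _ h.ne]; ring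
      _ ≤ -1 / l₁ * l i + 1 := by gcongr; exact hle i
  · rw [le_div_iff_of_neg h]
    linarith [hi₀ ▸ hβ i₀]

theorem stmt_1_general {m : ℕ} (S P A : Matrix (Fin m) (Fin m) ℝ)
    (hSneg : (-S).PosSemidef) (hS0 : S ≠ 0)
    [Invertible A] (hPA : P = Aᵀ * A)
    (hM : ((A⁻¹)ᵀ * S * A⁻¹).IsHermitian) :
    (⨅ i, hM.eigenvalues i) < 0 ∧
      IsGreatest {β : ℝ | 0 ≤ β ∧ (β • S + P).PosSemidef}
        (-1 / (⨅ i, hM.eigenvalues i)) := by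
  set M := (A⁻¹)ᵀ * S * A⁻¹
  have hSM : Aᵀ * M * A = S := by
    rw [← Matrix.mul_assoc, ← Matrix.mul_assoc, ← transpose_mul, inv_mul_of_invertible,
      transpose_one, one_mul, Matrix.mul_assoc, inv_mul_of_invertible, mul_one]
  have hpsd (β c : ℝ) : (β • S + c • P).PosSemidef ↔ ∀ i, 0 ≤ β * hM.eigenvalues i + c := by
    have hcong : β • S + c • P = star A * (β • M + c • 1) * A := by
      simp [← hSM, hPA, Matrix.mul_add, Matrix.add_mul, star_eq_conjTranspose]
    rw [← hM.posSemidef_smul_add_smul_one_iff, hcong,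
      (isUnit_of_invertible A).posSemidef_star_left_conjugate_iff]
  have hnonpos (i) : hM.eigenvalues i ≤ 0 := by
    simpa using (hpsd (-1) 0).1 (by simpa using hSneg) i
  have hneg : ⨅ i, hM.eigenvalues i < 0 := by
    obtain ⟨i, hi⟩ : ∃ i, hM.eigenvalues i ≠ 0 := by
      by_contra! h
      exact hS0 (by rw [← hSM, hM.eigenvalues_eq_zero_iff.1 (funext h)]; simp)
    exact (ciInf_le (Set.finite_range _).bddBelow i).trans_lt ((hnonpos i).lt_of_ne hi)
  refine ⟨hneg, ?_⟩
  convert isGreatest_setOf_forall_mul_add_one_nonneg hneg using 4 with β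
  simpa using hpsd β 1

/-- The regularized monotonicity indicator: for symmetric negative semidefinite `S ≠ 0`
and symmetric positive definite `P = AᵀA` with `A` invertible,
`max {β ≥ 0 : βS + P psd} = -1/λ₁` where `λ₁ < 0` is the smallest eigenvalue of
`A⁻ᵀ S A⁻¹`. -/
theorem stmt_1 {m : ℕ} (S P A : Matrix (Fin m) (Fin m) ℝ)
    (hS : S.IsHermitian) (hSneg : (-S).PosSemidef) (hS0 : S ≠ 0)
    (hP : P.PosDef) [Invertible A] (hPA : P = Aᵀ * A)
    (hM : ((A⁻¹)ᵀ * S * A⁻¹).IsHermitian) :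
    (⨅ i, hM.eigenvalues i) < 0 ∧
      IsGreatest {β : ℝ | 0 ≤ β ∧ (β • S + P).PosSemidef}
        (-1 / (⨅ i, hM.eigenvalues i)) :=
  stmt_1_general S P A hSneg hS0 hPA hM
end

section
/- Let L : H → ℝ^m be a bounded linear operator with L L* = -S_B for a symmetric matrix S_B ∈ ℝ^{m×m}. Then for every v ∈ Range(L): -vᵀ S_B⁺ v = ‖L⁺ v‖² ≥ 0, with equality if and only if v = 0. -/
/-- `Lp` is the Moore–Penrose pseudoinverse of `L`. -/
def IsMoorePenroseInverse {E F : Type*} [NormedAddCommGroup E] [InnerProductSpace ℝ E]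
    [CompleteSpace E] [NormedAddCommGroup F] [InnerProductSpace ℝ F] [CompleteSpace F]
    (L : E →L[ℝ] F) (Lp : F →L[ℝ] E) : Prop :=
  L ∘L Lp ∘L L = L ∧ Lp ∘L L ∘L Lp = Lp ∧
    ContinuousLinearMap.adjoint (L ∘L Lp) = L ∘L Lp ∧
    ContinuousLinearMap.adjoint (Lp ∘L L) = Lp ∘L L

/-!
Since `S_B = -L L*`, the operator `-(L⁺)* L⁺` satisfies the four Penrose equations for `S_B`
(both of its products with `S_B` reduce to `L L⁺`), so by uniqueness of the Moore–Penrose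
inverse `S_B⁺ = -(L⁺)* L⁺` and `-⟨v, S_B⁺ v⟩ = ‖L⁺ v‖²`. On `Range(L)` the projection `L L⁺`
is the identity, hence `L⁺ v = 0` forces `v = 0`.
-/

open ContinuousLinearMap
open scoped InnerProduct

namespace IsMoorePenroseInverse

variable {E F : Type*} [NormedAddCommGroup E] [InnerProductSpace ℝ E] [CompleteSpace E]
  [NormedAddCommGroup F] [InnerProductSpace ℝ F] [CompleteSpace F]
  {A : E →L[ℝ] F} {X Y : F →L[ℝ] E}

theorem adjoint (h : IsMoorePenroseInverse A X) : IsMoorePenroseInverse (A†) (X†) := by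
  obtain ⟨hAXA, hXAX, hAX, hXA⟩ := h
  refine ⟨?_, ?_, ?_, ?_⟩
  · rw [← adjoint_comp, ← adjoint_comp, comp_assoc, hAXA]
  · rw [← adjoint_comp, ← adjoint_comp, comp_assoc, hXAX]
  · rw [← adjoint_comp, hXA, hXA]
  · rw [← adjoint_comp, hAX, hAX]

theorem comp_eq_comp (hX : IsMoorePenroseInverse A X) (hY : IsMoorePenroseInverse A Y) :
    A ∘L X = A ∘L Y := by
  calc A ∘L X = ((A ∘L Y) ∘L (A ∘L X))† := by
          rw [← comp_assoc, comp_assoc A Y A, hY.1, hX.2.2.1]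
    _ = (A ∘L X) ∘L (A ∘L Y) := by rw [adjoint_comp, hX.2.2.1, hY.2.2.1]
    _ = A ∘L Y := by rw [← comp_assoc, comp_assoc A X A, hX.1]

theorem unique (hX : IsMoorePenroseInverse A X) (hY : IsMoorePenroseInverse A Y) : X = Y := by
  have hXA : X ∘L A = Y ∘L A := by
    simpa only [← adjoint_comp, adjoint_adjoint] using
      congrArg ContinuousLinearMap.adjoint (comp_eq_comp hX.adjoint hY.adjoint)
  calc X = X ∘L A ∘L X := hX.2.1.symm
    _ = Y ∘L A ∘L Y := by rw [comp_eq_comp hX hY, ← comp_assoc, hXA, comp_assoc]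
    _ = Y := hY.2.1

theorem neg (h : IsMoorePenroseInverse A X) : IsMoorePenroseInverse (-A) (-X) := by
  simpa only [IsMoorePenroseInverse, neg_comp, comp_neg, neg_neg, map_neg, neg_inj] using h

theorem comp_adjoint (h : IsMoorePenroseInverse A X) :
    IsMoorePenroseInverse (A ∘L A†) (X† ∘L X) := by
  obtain ⟨hAXA, hXAX, hAX, hXA⟩ := h
  have hA'X' : A† ∘L X† = X ∘L A := by rw [← adjoint_comp, hXA]
  have hX'A' : X† ∘L A† = A ∘L X := by rw [← adjoint_comp, hAX]
  have hMN : (A ∘L A†) ∘L (X† ∘L X) = A ∘L X := by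
    rw [comp_assoc, ← comp_assoc _ _ X, hA'X', comp_assoc X A X, hXAX]
  have hNM : (X† ∘L X) ∘L (A ∘L A†) = A ∘L X := by
    rw [comp_assoc, ← comp_assoc X, ← hA'X', comp_assoc, ← comp_assoc, hX'A', comp_assoc, hXAX]
  refine ⟨?_, ?_, ?_, ?_⟩
  · rw [← comp_assoc, hMN, ← comp_assoc, comp_assoc A X A, hAXA]
  · rw [← comp_assoc, hNM, ← hX'A', comp_assoc, ← comp_assoc _ _ X, hA'X', comp_assoc, hXAX]
  · rw [hMN, hAX]
  · rw [hNM, hAX]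

theorem apply_inv_apply_of_mem_range (h : IsMoorePenroseInverse A X) {y : F}
    (hy : y ∈ Set.range A) : A (X y) = y := by
  obtain ⟨x, rfl⟩ := hy
  exact congr($(h.1) x)

end IsMoorePenroseInverse

theorem stmt_7_general {H : Type*} [NormedAddCommGroup H] [InnerProductSpace ℝ H]
    [CompleteSpace H] {m : ℕ}
    (L : H →L[ℝ] EuclideanSpace ℝ (Fin m))
    (SB : EuclideanSpace ℝ (Fin m) →L[ℝ] EuclideanSpace ℝ (Fin m))
    (hLSB : L ∘L ContinuousLinearMap.adjoint L = -SB)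
    (SBp : EuclideanSpace ℝ (Fin m) →L[ℝ] EuclideanSpace ℝ (Fin m))
    (hSBp : IsMoorePenroseInverse SB SBp)
    (Lp : EuclideanSpace ℝ (Fin m) →L[ℝ] H)
    (hLp : IsMoorePenroseInverse L Lp) :
    ∀ v ∈ Set.range L,
      (-(inner ℝ v (SBp v) : ℝ) = ‖Lp v‖ ^ 2) ∧
      0 ≤ -(inner ℝ v (SBp v) : ℝ) ∧
      (-(inner ℝ v (SBp v) : ℝ) = 0 ↔ v = 0) := by
  have hSBp_eq : SBp = -(Lp† ∘L Lp) := by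
    rw [neg_eq_iff_eq_neg.mp hLSB.symm] at hSBp
    exact hSBp.unique hLp.comp_adjoint.neg
  intro v hv
  have hquad : -(inner ℝ v (SBp v) : ℝ) = ‖Lp v‖ ^ 2 := by
    rw [hSBp_eq, neg_apply, inner_neg_right, neg_neg, comp_apply, adjoint_inner_right,
      real_inner_self_eq_norm_sq]
  refine ⟨hquad, hquad ▸ by positivity, ?_⟩
  rw [hquad, sq_eq_zero_iff, norm_eq_zero]
  constructor
  · intro h
    rw [← hLp.apply_inv_apply_of_mem_range hv, h, map_zero]
  · rintro rfl
    exact map_zero Lp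

/-- If `L : H → ℝ^m` is bounded linear with `L L* = -S_B` for a symmetric operator
`S_B`, then for every `v ∈ Range(L)`: `-⟨v, S_B⁺ v⟩ = ‖L⁺ v‖² ≥ 0`, with equality
iff `v = 0`. This is the coercivity statement of Theorem 3.3. -/
theorem stmt_7 {H : Type*} [NormedAddCommGroup H] [InnerProductSpace ℝ H]
    [CompleteSpace H] {m : ℕ}
    (L : H →L[ℝ] EuclideanSpace ℝ (Fin m))
    (SB : EuclideanSpace ℝ (Fin m) →L[ℝ] EuclideanSpace ℝ (Fin m))
    (hSB : ContinuousLinearMap.adjoint SB = SB)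
    (hLSB : L ∘L ContinuousLinearMap.adjoint L = -SB)
    (SBp : EuclideanSpace ℝ (Fin m) →L[ℝ] EuclideanSpace ℝ (Fin m))
    (hSBp : IsMoorePenroseInverse SB SBp)
    (Lp : EuclideanSpace ℝ (Fin m) →L[ℝ] H)
    (hLp : IsMoorePenroseInverse L Lp) :
    ∀ v ∈ Set.range L,
      (-(inner ℝ v (SBp v) : ℝ) = ‖Lp v‖ ^ 2) ∧
      0 ≤ -(inner ℝ v (SBp v) : ℝ) ∧
      (-(inner ℝ v (SBp v) : ℝ) = 0 ↔ v = 0) :=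
  stmt_7_general L SB hLSB SBp hSBp Lp hLp
end

section
/- Let u₁, …, u_m ∈ H and suppose the only vectors w ∈ ℝ^m with ∑_j w_j u_j = 0 are the constant vectors w₁ = ⋯ = w_m. Define L : H → ℝ^m by (L h)_j = ⟨h, u_j⟩. Then Range(L) = { v ∈ ℝ^m : ∑_j v_j = 0 }. -/
/-! Since `⟪L h, w⟫ = ⟪h, ∑ j, w j • u j⟫`, the orthogonal complement of `Range L` in `ℝ^m` is the
space of relations `∑ j, w j • u j = 0`, i.e. `ℝ ∙ 𝟙` by hypothesis. As `ℝ^m` is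
finite-dimensional, `Range L = (Range L)ᗮᗮ = 𝟙ᗮ`, the zero-sum vectors. -/

open scoped InnerProductSpace

section MeasurementMap

variable {ι H : Type*} [NormedAddCommGroup H] [InnerProductSpace ℝ H]

def measurementMap (u : ι → H) : H →ₗ[ℝ] EuclideanSpace ℝ ι where
  toFun h := WithLp.toLp 2 fun j => ⟪h, u j⟫_ℝ
  map_add' x y := by ext j; simp [inner_add_left]
  map_smul' c x := by ext j; simp [real_inner_smul_left]

theorem measurementMap_apply (u : ι → H) (h : H) (j : ι) :
    measurementMap u h j = ⟪h, u j⟫_ℝ :=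
  rfl

variable [Fintype ι]

theorem inner_measurementMap (u : ι → H) (h : H) (z : EuclideanSpace ℝ ι) :
    ⟪measurementMap u h, z⟫_ℝ = ⟪h, ∑ j, z j • u j⟫_ℝ := by
  simp [PiLp.inner_apply, measurementMap_apply, inner_sum, real_inner_smul_right, mul_comm]

theorem mem_orthogonal_range_measurementMap_iff (u : ι → H) (z : EuclideanSpace ℝ ι) :
    z ∈ (LinearMap.range (measurementMap u))ᗮ ↔ ∑ j, z j • u j = 0 := by
  simp only [Submodule.mem_orthogonal, LinearMap.mem_range, forall_exists_index,
    forall_apply_eq_imp_iff, inner_measurementMap]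
  exact ⟨fun h => inner_self_eq_zero.mp (h _), fun h x => by rw [h, inner_zero_right]⟩

def allOnes : EuclideanSpace ℝ ι := WithLp.toLp 2 fun _ => 1

theorem mem_orthogonal_span_allOnes_iff (v : EuclideanSpace ℝ ι) :
    v ∈ (ℝ ∙ (allOnes : EuclideanSpace ℝ ι))ᗮ ↔ ∑ j, v j = 0 := by
  simp [Submodule.mem_orthogonal_singleton_iff_inner_right, PiLp.inner_apply, allOnes]

theorem range_measurementMap_eq_orthogonal_span_allOnes (u : ι → H)
    (hker : ∀ w : ι → ℝ, ∑ j, w j • u j = 0 ↔ ∃ c : ℝ, ∀ j, w j = c) :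
    LinearMap.range (measurementMap u) = (ℝ ∙ (allOnes : EuclideanSpace ℝ ι))ᗮ := by
  have hperp : (LinearMap.range (measurementMap u))ᗮ = ℝ ∙ allOnes := by
    ext z
    rw [mem_orthogonal_range_measurementMap_iff, hker, Submodule.mem_span_singleton]
    refine ⟨fun ⟨c, hc⟩ => ⟨c, ?_⟩, fun ⟨c, hc⟩ => ⟨c, fun j => ?_⟩⟩
    · ext j; simp [allOnes, hc j]
    · simp [← hc, allOnes]
  rw [← hperp, Submodule.orthogonal_orthogonal]

end MeasurementMap

theorem stmt_10_general {H : Type*} [NormedAddCommGroup H] [InnerProductSpace ℝ H]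
    {m : ℕ} (u : Fin m → H)
    (hker : ∀ w : Fin m → ℝ, (∑ j, w j • u j = 0 ↔ ∃ c : ℝ, ∀ j, w j = c)) :
    {v : Fin m → ℝ | ∃ h : H, ∀ j, (inner ℝ h (u j) : ℝ) = v j} =
      {v : Fin m → ℝ | ∑ j, v j = 0} := by
  ext v
  have hrange := range_measurementMap_eq_orthogonal_span_allOnes u hker
  rw [Set.mem_ofPred_eq, Set.mem_ofPred_eq, ← mem_orthogonal_span_allOnes_iff (WithLp.toLp 2 v),
    ← hrange, LinearMap.mem_range]
  simp only [WithLp.ext_iff, funext_iff, measurementMap_apply]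

/-- Abstract version of Lemma 3.7(c): if the vectors `w ∈ ℝ^m` with `∑_j w_j u_j = 0`
are exactly the constant vectors, then the range of `L : h ↦ (⟨h, u_j⟩)_j` is the
space of zero-sum vectors `{v : ∑_j v_j = 0}`. -/
theorem stmt_10 {H : Type*} [NormedAddCommGroup H] [InnerProductSpace ℝ H]
    [CompleteSpace H] {m : ℕ} (u : Fin m → H)
    (hker : ∀ w : Fin m → ℝ, (∑ j, w j • u j = 0 ↔ ∃ c : ℝ, ∀ j, w j = c)) :
    {v : Fin m → ℝ | ∃ h : H, ∀ j, (inner ℝ h (u j) : ℝ) = v j} =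
      {v : Fin m → ℝ | ∑ j, v j = 0} :=
  stmt_10_general u hker
end
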